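/- arXiv:2411.00339 — 3 statements merged into one kernel-verified Lean document; each statement's English description precedes it below -/
import Mathlib

section
/- The map (μ, σ) ↦ σ · ierfc((m − μ)/(√2 σ)) on ℝ × (0, ∞) is strictly increasing in μ for fixed σ, and strictly increasing in σ for fixed μ. Consequently, if μ₋ < μ < μ₊ and σ₋ < σ < σ₊, then σ₋ ierfc((m−μ₋)/(√2 σ₋)) < σ ierfc((m−μ)/(√2 σ)) < σ₊ ierfc((m−μ₊)/(√2 σ₊)). -/
open Real

/-- The complementary error function `erfc x = (2/√π) ∫_x^∞ e^{−u²} du`. -/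
noncomputable def erfc (x : ℝ) : ℝ := (2 / Real.sqrt π) * ∫ u in Set.Ioi x, Real.exp (-u ^ 2)

/-- `ierfc` in closed form: `ierfc x = e^{−x²}/√π − x · erfc x`. -/
noncomputable def ierfc (x : ℝ) : ℝ := Real.exp (-x ^ 2) / Real.sqrt π - x * erfc x

/-!
Since `ierfc' = -erfc < 0`, `ierfc` is strictly decreasing, which gives monotonicity
in `μ`. For `σ`, the derivative of `σ ↦ σ · ierfc (c / σ)` is
`ierfc ζ + ζ · erfc ζ = e^{-ζ²}/√π > 0` with `ζ = c / σ`.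
-/

open MeasureTheory Set

theorem hasDerivAt_integral_Ioi {E : Type*} [NormedAddCommGroup E] [NormedSpace ℝ E]
    [CompleteSpace E] {f : ℝ → E} (hf : Integrable f) (hc : Continuous f) (x : ℝ) :
    HasDerivAt (fun y => ∫ u in Ioi y, f u) (-f x) x := by
  have h_tail :
      (fun y => ∫ u in Ioi y, f u) = fun y => (∫ u in Ioi 0, f u) - ∫ u in 0..y, f u := by
    ext y
    rw [← intervalIntegral.integral_Ioi_sub_Ioi' hf.integrableOn hf.integrableOn, sub_sub_cancel]
  rw [h_tail, ← zero_sub]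
  exact (hasDerivAt_const x _).sub (hc.integral_hasStrictDerivAt 0 x).hasDerivAt

lemma integrable_exp_neg_sq : Integrable fun u : ℝ => exp (-u ^ 2) := by
  simpa using integrable_exp_neg_mul_sq one_pos

lemma continuous_exp_neg_sq : Continuous fun u : ℝ => exp (-u ^ 2) := by
  fun_prop

lemma integral_Ioi_exp_neg_sq_pos (x : ℝ) : 0 < ∫ u in Ioi x, exp (-u ^ 2) := by
  rw [setIntegral_pos_iff_support_of_nonneg_ae (.of_forall fun u => (exp_pos _).le)
    integrable_exp_neg_sq.integrableOn]
  simp [Function.support, exp_ne_zero]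

lemma erfc_pos (x : ℝ) : 0 < erfc x := by
  unfold erfc
  have := integral_Ioi_exp_neg_sq_pos x
  positivity

lemma hasDerivAt_erfc (x : ℝ) : HasDerivAt erfc (-(2 / √π * exp (-x ^ 2))) x := by
  rw [← mul_neg]
  exact (hasDerivAt_integral_Ioi integrable_exp_neg_sq continuous_exp_neg_sq x).const_mul _

lemma hasDerivAt_ierfc (x : ℝ) : HasDerivAt ierfc (-erfc x) x := by
  have h_gauss : HasDerivAt (fun x : ℝ => exp (-x ^ 2)) (exp (-x ^ 2) * (-2 * x)) x := by
    simpa using ((hasDerivAt_pow 2 x).neg).exp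
  refine ((h_gauss.div_const √π).sub ((hasDerivAt_id' x).mul (hasDerivAt_erfc x))).congr_deriv ?_
  ring

lemma ierfc_add_mul_erfc (x : ℝ) : ierfc x + x * erfc x = exp (-x ^ 2) / √π := by
  rw [ierfc, sub_add_cancel]

lemma ierfc_strictAnti : StrictAnti ierfc :=
  strictAnti_of_hasDerivAt_neg hasDerivAt_ierfc fun x => neg_neg_of_pos (erfc_pos x)

lemma hasDerivAt_mul_comp_div {f : ℝ → ℝ} {f' c σ : ℝ} (hf : HasDerivAt f f' (c / σ))
    (hσ : σ ≠ 0) : HasDerivAt (fun s => s * f (c / s)) (f (c / σ) - c / σ * f') σ := by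
  have h_inner : HasDerivAt (fun s => c / s) (-c / σ ^ 2) σ := by
    simpa [div_eq_mul_inv, mul_neg] using (hasDerivAt_inv hσ).const_mul c
  refine ((hasDerivAt_id' σ).mul (hf.comp σ h_inner)).congr_deriv ?_
  rw [Function.comp_apply]
  field_simp
  ring

lemma strictMonoOn_mul_ierfc_div (c : ℝ) :
    StrictMonoOn (fun σ => σ * ierfc (c / σ)) (Ioi 0) := by
  refine strictMonoOn_of_hasDerivWithinAt_pos (convex_Ioi 0)
    (f' := fun σ => exp (-(c / σ) ^ 2) / √π) ?_ ?_ fun _ _ => by positivity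
  · intro σ hσ
    exact (hasDerivAt_mul_comp_div (hasDerivAt_ierfc _) (ne_of_gt hσ)).continuousAt
      |>.continuousWithinAt
  · intro σ hσ
    rw [interior_Ioi] at hσ
    have h := hasDerivAt_mul_comp_div (hasDerivAt_ierfc (c / σ)) (ne_of_gt hσ)
    rw [mul_neg, sub_neg_eq_add, ierfc_add_mul_erfc] at h
    exact h.hasDerivWithinAt

lemma strictMono_mul_ierfc_sub_div (m : ℝ) {σ τ : ℝ} (hσ : 0 < σ) (hτ : 0 < τ) :
    StrictMono fun μ => σ * ierfc ((m - μ) / τ) :=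
  fun _ _ h => mul_lt_mul_of_pos_left
    (ierfc_strictAnti (div_lt_div_of_pos_right (sub_lt_sub_left h m) hτ)) hσ

/-- The map `(μ, σ) ↦ σ · ierfc((m − μ)/(√2 σ))` is strictly increasing in `μ`
for fixed `σ > 0` and strictly increasing in `σ > 0` for fixed `μ`;
consequently nested confidence bounds on `(μ, σ)` give nested bounds on the
oracle quantity. -/
theorem sigma_ierfc_strict_mono (m : ℝ) :
    (∀ σ : ℝ, 0 < σ →
      StrictMono fun μ : ℝ => σ * ierfc ((m - μ) / (Real.sqrt 2 * σ))) ∧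
    (∀ μ : ℝ,
      StrictMonoOn (fun σ : ℝ => σ * ierfc ((m - μ) / (Real.sqrt 2 * σ))) (Set.Ioi 0)) ∧
    (∀ μm μ μp σm σ σp : ℝ, 0 < σm →
      μm < μ → μ < μp → σm < σ → σ < σp →
      σm * ierfc ((m - μm) / (Real.sqrt 2 * σm)) < σ * ierfc ((m - μ) / (Real.sqrt 2 * σ)) ∧
      σ * ierfc ((m - μ) / (Real.sqrt 2 * σ)) < σp * ierfc ((m - μp) / (Real.sqrt 2 * σp))) := by
  have h_mu : ∀ σ : ℝ, 0 < σ →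
      StrictMono fun μ : ℝ => σ * ierfc ((m - μ) / (√2 * σ)) := fun σ hσ =>
    strictMono_mul_ierfc_sub_div m hσ (by positivity)
  have h_sigma : ∀ μ : ℝ,
      StrictMonoOn (fun σ : ℝ => σ * ierfc ((m - μ) / (√2 * σ))) (Ioi 0) := by
    intro μ
    simpa only [← div_div] using strictMonoOn_mul_ierfc_div ((m - μ) / √2)
  refine ⟨h_mu, h_sigma, fun μm μ μp σm σ σp hσm hμm hμp hσ hσp => ?_⟩
  have hσ₀ : 0 < σ := hσm.trans hσ
  exact ⟨(h_mu σm hσm hμm).trans (h_sigma μ hσm hσ₀ hσ),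
    (h_mu σ hσ₀ hμp).trans (h_sigma μp hσ₀ (hσ₀.trans hσp) hσp)⟩
end

section
/- For Gaussian arms with parameters (μ₁, σ₁) = (0, 1) and (μ₂, σ₂) = (−1, 2) and threshold m = 0.5, the expected-improvement quantities satisfy σ₁ ierfc((m−μ₁)/(√2σ₁)) < σ₂ ierfc((m−μ₂)/(√2σ₂)) while the probabilities of improvement satisfy erfc((m−μ₁)/(√2σ₁)) > erfc((m−μ₂)/(√2σ₂)). Hence the max-bandit (EI) oracle and the PI oracle select different best arms. -/
/-!
Since `∫₀^∞ e^{-u²} du = √π/2`, we have `√π · ierfc z = e^{-z²} - √π z + 2z ∫₀^z e^{-u²} du`.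
Bounding the integrand between `1 - u²` and `1` brackets `√π · ierfc z` up to a polynomial
error, and at `ζ₁ = √2/4`, `ζ₂ = 3√2/8` these brackets already separate `ierfc ζ₁ ≈ 0.28` from
`2 ierfc ζ₂ ≈ 0.37`, using only `π < 3.15` and `1 + x ≤ eˣ`. The PI inequality is the strict
antitonicity of `erfc`.
-/

open Real

open MeasureTheory Set

lemma erfc_eq_one_sub_integral (z : ℝ) :
    erfc z = 1 - 2 / √π * ∫ u in (0 : ℝ)..z, exp (-u ^ 2) := by
  have hgauss : ∫ u in Ioi (0 : ℝ), exp (-u ^ 2) = √π / 2 := by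
    simpa using integral_gaussian_Ioi 1
  have hπ : √π ≠ 0 := (sqrt_pos.mpr pi_pos).ne'
  rw [← intervalIntegral.integral_Ioi_sub_Ioi' integrable_exp_neg_sq.integrableOn
    integrable_exp_neg_sq.integrableOn, hgauss, erfc]
  field_simp
  ring

lemma erfc_strictAnti : StrictAnti erfc := by
  intro a b hab
  have hpos : 0 < ∫ u in a..b, exp (-u ^ 2) :=
    intervalIntegral.intervalIntegral_pos_of_pos_on
      integrable_exp_neg_sq.intervalIntegrable (fun u _ => exp_pos _) hab
  rw [erfc_eq_one_sub_integral, erfc_eq_one_sub_integral,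
    ← intervalIntegral.integral_add_adjacent_intervals (b := a)
      integrable_exp_neg_sq.intervalIntegrable integrable_exp_neg_sq.intervalIntegrable]
  have hc : 0 < 2 / √π := by positivity
  linarith [mul_pos hc hpos]

lemma integral_exp_neg_sq_le {z : ℝ} (hz : 0 ≤ z) : ∫ u in (0 : ℝ)..z, exp (-u ^ 2) ≤ z := by
  simpa using intervalIntegral.integral_mono_on hz integrable_exp_neg_sq.intervalIntegrable
    intervalIntegrable_const fun u _ => exp_le_one_iff.mpr (neg_nonpos.mpr (sq_nonneg u))

lemma sub_pow_three_div_three_le_integral_exp_neg_sq {z : ℝ} (hz : 0 ≤ z) :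
    z - z ^ 3 / 3 ≤ ∫ u in (0 : ℝ)..z, exp (-u ^ 2) := by
  have hpoly : ∫ u in (0 : ℝ)..z, (1 - u ^ 2) = z - z ^ 3 / 3 := by
    norm_num [intervalIntegral.integral_sub, integral_pow]
  rw [← hpoly]
  refine intervalIntegral.integral_mono_on hz
    (Continuous.intervalIntegrable (by fun_prop) _ _)
    integrable_exp_neg_sq.intervalIntegrable fun u _ => ?_
  linarith [add_one_le_exp (-u ^ 2)]

lemma sqrt_pi_mul_ierfc (z : ℝ) :
    √π * ierfc z = exp (-z ^ 2) - √π * z + 2 * z * ∫ u in (0 : ℝ)..z, exp (-u ^ 2) := by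
  have hπ : √π ≠ 0 := (sqrt_pos.mpr pi_pos).ne'
  rw [ierfc, erfc_eq_one_sub_integral]
  field_simp
  ring

lemma sqrt_pi_mul_ierfc_le {z : ℝ} (hz : 0 ≤ z) :
    √π * ierfc z ≤ exp (-z ^ 2) - √π * z + 2 * z ^ 2 := by
  rw [sqrt_pi_mul_ierfc]
  nlinarith [mul_le_mul_of_nonneg_left (integral_exp_neg_sq_le hz) hz]

lemma le_sqrt_pi_mul_ierfc {z : ℝ} (hz : 0 ≤ z) :
    exp (-z ^ 2) - √π * z + 2 * z ^ 2 - 2 * z ^ 4 / 3 ≤ √π * ierfc z := by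
  rw [sqrt_pi_mul_ierfc]
  nlinarith [mul_le_mul_of_nonneg_left (sub_pow_three_div_three_le_integral_exp_neg_sq hz) hz]

lemma ierfc_lt_two_mul_ierfc : ierfc (√2 / 4) < 2 * ierfc (3 * √2 / 8) := by
  have hπ : 0 < √π := sqrt_pos.mpr pi_pos
  have h2 : √2 ^ 2 = 2 := sq_sqrt zero_le_two
  have hz₁ : (√2 / 4) ^ 2 = 1 / 8 := by rw [div_pow, h2]; norm_num
  have hz₂ : (3 * √2 / 8) ^ 2 = 9 / 32 := by rw [div_pow, mul_pow, h2]; norm_num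
  have hupper := sqrt_pi_mul_ierfc_le (z := √2 / 4) (by positivity)
  have hlower := le_sqrt_pi_mul_ierfc (z := 3 * √2 / 8) (by positivity)
  rw [hz₁] at hupper
  rw [show 4 = 2 * 2 from rfl, pow_mul, hz₂] at hlower
  have he₁ : exp (-(1 / 8)) ≤ 8 / 9 := by
    rw [exp_neg]
    exact inv_le_of_inv_le₀ (by norm_num) (by linarith [add_one_le_exp (1 / 8)])
  have he₂ : 23 / 32 ≤ exp (-(9 / 32)) := by linarith [add_one_le_exp (-(9 / 32))]
  have hsqrt : √π * √2 < 2.6 := by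
    rw [← sqrt_mul pi_pos.le, sqrt_lt' (by norm_num)]
    linarith [pi_lt_d2]
  rw [← mul_lt_mul_iff_right₀ hπ, mul_left_comm]
  linarith

/-- For Gaussian arms `(μ₁, σ₁) = (0, 1)`, `(μ₂, σ₂) = (−1, 2)` and threshold
`m = 0.5`, the EI quantities satisfy `σ₁ ierfc ζ₁ < σ₂ ierfc ζ₂` while the PI
quantities satisfy `erfc ζ₁ > erfc ζ₂`: the EI (max-bandit) oracle and the PI
oracle select different best arms. -/
theorem ei_pi_oracles_disagree :
    (1 : ℝ) * ierfc (((0.5 : ℝ) - 0) / (Real.sqrt 2 * 1)) <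
      (2 : ℝ) * ierfc (((0.5 : ℝ) - (-1)) / (Real.sqrt 2 * 2)) ∧
    erfc (((0.5 : ℝ) - (-1)) / (Real.sqrt 2 * 2)) <
      erfc (((0.5 : ℝ) - 0) / (Real.sqrt 2 * 1)) := by
  have h2 : √2 * √2 = 2 := mul_self_sqrt zero_le_two
  have hζ₁ : ((0.5 : ℝ) - 0) / (√2 * 1) = √2 / 4 := by
    rw [div_eq_div_iff (by positivity) (by norm_num)]
    linear_combination -h2
  have hζ₂ : ((0.5 : ℝ) - (-1)) / (√2 * 2) = 3 * √2 / 8 := by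
    rw [div_eq_div_iff (by positivity) (by norm_num)]
    linear_combination -6 * h2
  rw [hζ₁, hζ₂, one_mul]
  have hζ : √2 / 4 < 3 * √2 / 8 := by linarith [sqrt_pos.mpr (zero_lt_two (α := ℝ))]
  exact ⟨ierfc_lt_two_mul_ierfc, erfc_strictAnti hζ⟩
end

section
/- Let Z be a random variable with 0 ≤ Z ≤ 1 and let P, P' be probability measures with P ≪ P'. Then KL(P, P') ≥ kl(E[Z], E'[Z]), where kl is the Bernoulli KL divergence and E, E' denote expectations under P, P' respectively. -/
/-!
The Markov kernel `ω ↦ Ber(Z ω)` on `Bool` sends `P` and `P'` to `Ber(E[Z])` and `Ber(E'[Z])`,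
whose KL divergence is `kl(E[Z], E'[Z])`. The data-processing inequality for Markov kernels
then bounds it by `KL(P, P')`.
-/

open MeasureTheory

/-- Bernoulli KL divergence `kl(p,q) = p ln(p/q) + (1−p) ln((1−p)/(1−q))`. -/
noncomputable def bernKL (p q : ℝ) : ℝ :=
  p * Real.log (p / q) + (1 - p) * Real.log ((1 - p) / (1 - q))

open InformationTheory ProbabilityTheory unitInterval
open scoped ENNReal

namespace MeasureTheory

variable {X : Type*} [MeasurableSpace X] [MeasurableSingletonClass X] {μ ν : Measure X}

lemma Measure.rnDeriv_mul_measure_singleton [μ.HaveLebesgueDecomposition ν] [SFinite ν]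
    (hμν : μ ≪ ν) (x : X) : μ.rnDeriv ν x * ν {x} = μ {x} := by
  rw [← lintegral_singleton, Measure.setLIntegral_rnDeriv hμν]

lemma integral_llr_eq_sum [Fintype X] [IsFiniteMeasure μ] [IsFiniteMeasure ν] (hμν : μ ≪ ν) :
    ∫ x, llr μ ν x ∂μ = ∑ x, μ.real {x} * Real.log (μ.real {x} / ν.real {x}) := by
  rw [integral_fintype Integrable.of_finite]
  refine Finset.sum_congr rfl fun x _ => ?_
  rcases eq_or_ne (μ {x}) 0 with hμx | hμx
  · simp [measureReal_def, hμx]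
  have hνx : ν {x} ≠ 0 := fun h => hμx (hμν h)
  rw [smul_eq_mul, llr_def, measureReal_def, measureReal_def, ← ENNReal.toReal_div,
    ← Measure.rnDeriv_mul_measure_singleton hμν x,
    ENNReal.mul_div_cancel_right hνx (measure_ne_top ν _)]

end MeasureTheory

namespace ProbabilityTheory

lemma integral_llr_bernoulliMeasure {p q : I} (h : Ber(true, false, p) ≪ Ber(true, false, q)) :
    ∫ b, llr Ber(true, false, p) Ber(true, false, q) b ∂Ber(true, false, p) = bernKL p q := by
  simp [integral_llr_eq_sum h, bernKL]

noncomputable def bernoulliKernel : Kernel I Bool where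
  toFun p := Ber(true, false, p)
  measurable' := Measure.measurable_of_measurable_coe _ fun s _ => by
    simp only [bernoulliMeasure_def, Measure.add_apply, Measure.smul_apply, ENNReal.smul_def,
      smul_eq_mul]
    fun_prop

instance : IsMarkovKernel bernoulliKernel :=
  ⟨fun p => by dsimp [bernoulliKernel]; infer_instance⟩

variable {Ω : Type*} [MeasurableSpace Ω] {ξ : Ω → I}

lemma integrable_coe_unitInterval (μ : Measure Ω) [IsFiniteMeasure μ] (hξ : Measurable ξ) :
    Integrable (fun ω => (ξ ω : ℝ)) μ :=
  (integrable_const 1).mono' (measurable_subtype_coe.comp hξ).aestronglyMeasurable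
    (ae_of_all _ fun ω => by simpa [abs_of_nonneg (ξ ω).2.1] using (ξ ω).2.2)

lemma integral_coe_unitInterval_mem (μ : Measure Ω) [IsProbabilityMeasure μ]
    (hξ : Measurable ξ) : ∫ ω, (ξ ω : ℝ) ∂μ ∈ I :=
  (convex_Icc 0 1).integral_mem isClosed_Icc (ae_of_all _ fun ω => (ξ ω).2)
    (integrable_coe_unitInterval μ hξ)

lemma lintegral_toNNReal_unitInterval (μ : Measure Ω) [IsFiniteMeasure μ] (hξ : Measurable ξ)
    {m : I} (hm : (m : ℝ) = ∫ ω, (ξ ω : ℝ) ∂μ) :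
    ∫⁻ ω, (unitInterval.toNNReal (ξ ω) : ℝ≥0∞) ∂μ = unitInterval.toNNReal m := by
  rw [lintegral_coe_eq_integral _ (integrable_coe_unitInterval μ hξ)]
  simp only [coe_toNNReal, ← hm]
  rw [← coe_toNNReal m, ENNReal.ofReal_coe_nnreal]

lemma bernoulliKernel_comap_comp (P : Measure Ω) [IsProbabilityMeasure P] (hξ : Measurable ξ)
    {m : I} (hm : (m : ℝ) = ∫ ω, (ξ ω : ℝ) ∂P) :
    bernoulliKernel.comap ξ hξ ∘ₘ P = Ber(true, false, m) := by
  have hmass_true : ∫⁻ ω, (unitInterval.toNNReal (ξ ω) : ℝ≥0∞) ∂P = unitInterval.toNNReal m :=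
    lintegral_toNNReal_unitInterval P hξ hm
  have hmass_false :
      ∫⁻ ω, (unitInterval.toNNReal (σ (ξ ω)) : ℝ≥0∞) ∂P = unitInterval.toNNReal (σ m) := by
    refine lintegral_toNNReal_unitInterval P (continuous_symm.measurable.comp hξ) ?_
    simp only [Function.comp_apply, coe_symm_eq]
    rw [integral_sub (integrable_const 1) (integrable_coe_unitInterval P hξ), hm]
    simp
  ext s hs
  rw [Measure.bind_apply hs (Kernel.aemeasurable _)]
  simp only [Kernel.comap_apply, bernoulliKernel, Kernel.coe_mk, bernoulliMeasure_def,
    Measure.add_apply, Measure.smul_apply, ENNReal.smul_def, smul_eq_mul]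
  rw [lintegral_add_left, lintegral_mul_const, lintegral_mul_const, hmass_true, hmass_false]
  all_goals fun_prop

theorem bernKL_integral_le_toReal_klDiv {P P' : Measure Ω} [IsProbabilityMeasure P]
    [IsProbabilityMeasure P'] (h : klDiv P P' ≠ ∞) (hξ : Measurable ξ) :
    bernKL (∫ ω, (ξ ω : ℝ) ∂P) (∫ ω, (ξ ω : ℝ) ∂P') ≤ (klDiv P P').toReal := by
  set p : I := ⟨_, integral_coe_unitInterval_mem P hξ⟩
  set q : I := ⟨_, integral_coe_unitInterval_mem P' hξ⟩
  have hdata : klDiv Ber(true, false, p) Ber(true, false, q) ≤ klDiv P P' := by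
    rw [← bernoulliKernel_comap_comp P hξ (m := p) rfl,
      ← bernoulliKernel_comap_comp P' hξ (m := q) rfl]
    exact klDiv_comp_right_le P P' _
  have hac : Ber(true, false, p) ≪ Ber(true, false, q) :=
    (klDiv_ne_top_iff.1 (ne_top_of_le_ne_top h hdata)).1
  calc bernKL p q = (klDiv Ber(true, false, p) Ber(true, false, q)).toReal := by
        rw [toReal_klDiv_of_measure_eq hac (by simp), integral_llr_bernoulliMeasure hac]
    _ ≤ (klDiv P P').toReal := ENNReal.toReal_mono h hdata

end ProbabilityTheory

/-- Fundamental inequality (Garivier–Ménard–Stoltz): for probability measures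
`P ≪ P'` with `KL(P, P') = ∫ ln(dP/dP') dP`, and any `[0,1]`-valued random
variable `Z`, we have `KL(P, P') ≥ kl(E[Z], E'[Z])`. -/
theorem kl_ge_bernKL_of_mean
    {Ω : Type*} [MeasurableSpace Ω]
    (P P' : Measure Ω) [IsProbabilityMeasure P] [IsProbabilityMeasure P']
    (hac : P ≪ P')
    (KL : ℝ) (hKL : KL = ∫ ω, Real.log ((P.rnDeriv P' ω).toReal) ∂P)
    (hint : Integrable (fun ω => Real.log ((P.rnDeriv P' ω).toReal)) P)
    (Z : Ω → ℝ) (hZmeas : Measurable Z)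
    (hZ01 : ∀ ω, 0 ≤ Z ω ∧ Z ω ≤ 1) :
    bernKL (∫ ω, Z ω ∂P) (∫ ω, Z ω ∂P') ≤ KL := by
  have hKL_klDiv : KL = (klDiv P P').toReal := by
    rw [hKL, toReal_klDiv_of_measure_eq hac (by simp)]
    rfl
  rw [hKL_klDiv]
  exact bernKL_integral_le_toReal_klDiv (ξ := fun ω => ⟨Z ω, hZ01 ω⟩) (klDiv_ne_top hac hint)
    hZmeas.subtype_mk
end
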